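/- For the generalized Gaussian family with β even, the skewness tensor component T₁₁₂ = E[(∂_μ l)²(∂_σ l)] equals (1/σ³)·(Γ((3β−1)/β)β³ − Γ((2β−1)/β)β²)/Γ(1/β). -/

import Mathlib

open MeasureTheory

/-- The generalized Gaussian density. -/
noncomputable def genGaussPdf (β : ℕ) (μ σ x : ℝ) : ℝ :=
  (β : ℝ) / (2 * σ * Real.Gamma (1 / (β : ℝ))) * Real.exp (-(x - μ) ^ β / σ ^ β)

/-- The log-likelihood `l = log f`. -/
noncomputable def genGaussLogLik (β : ℕ) (μ σ x : ℝ) : ℝ :=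
  Real.log (genGaussPdf β μ σ x)

/-!
With `z = (x - μ) / σ` the two scores are `∂_μ l = (β / σ) z ^ (β - 1)` and
`∂_σ l = (β z ^ β - 1) / σ`, so the integrand is
`β³ / (2 Γ(1/β) σ⁴) · (β z ^ (3β - 2) - z ^ (2β - 2)) e ^ (-z ^ β)`.
After the substitution only even moments of `e ^ (-|z| ^ β)` remain; by symmetry they are twice
the half-line Gamma integrals `∫₀^∞ z ^ k e ^ (-z ^ β) dz = Γ((k + 1) / β) / β`.
-/

open Real Set

theorem integrable_comp_abs {f : ℝ → ℝ} (hf : IntegrableOn f (Ioi 0)) :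
    Integrable fun x => f |x| := by
  have hIoi : IntegrableOn (fun x => f |x|) (Ioi 0) :=
    hf.congr_fun (fun x hx => by rw [abs_of_pos hx]) measurableSet_Ioi
  have hIic : IntegrableOn (fun x => f |x|) (Iic 0) := by
    have hneg : MeasurableEmbedding fun x : ℝ => -x := (Homeomorph.neg ℝ).measurableEmbedding
    rw [← Measure.map_neg_eq_self (volume : Measure ℝ), hneg.integrableOn_map_iff]
    simp_rw [Function.comp_def, abs_neg, neg_preimage, neg_Iic, neg_zero]
    exact (integrableOn_Ici_iff_integrableOn_Ioi).mpr hIoi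
  rw [← integrableOn_univ, ← Iic_union_Ioi (a := 0)]
  exact hIic.union hIoi

theorem integrable_abs_rpow_mul_exp_neg_abs_rpow {p q : ℝ} (hp : 0 < p) (hq : -1 < q) :
    Integrable fun x : ℝ => |x| ^ q * exp (-|x| ^ p) :=
  integrable_comp_abs (f := fun x => x ^ q * exp (-x ^ p))
    (integrableOn_rpow_mul_exp_neg_rpow hq hp)

theorem integral_abs_rpow_mul_exp_neg_abs_rpow {p q : ℝ} (hp : 0 < p) (hq : -1 < q) :
    ∫ x : ℝ, |x| ^ q * exp (-|x| ^ p) = 2 / p * Gamma ((q + 1) / p) := by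
  rw [integral_comp_abs (f := fun x => x ^ q * exp (-x ^ p)), integral_rpow_mul_exp_neg_rpow hp hq]
  ring

section EvenMoments

variable {k β : ℕ}

theorem pow_mul_exp_neg_pow_eq_abs_rpow (hk : Even k) (hβ : Even β) (x : ℝ) :
    x ^ k * exp (-x ^ β) = |x| ^ (k : ℝ) * exp (-|x| ^ (β : ℝ)) := by
  rw [rpow_natCast, rpow_natCast, hk.pow_abs, hβ.pow_abs]

theorem integrable_pow_mul_exp_neg_pow (hk : Even k) (hβ : Even β) (hβ₀ : 0 < β) :
    Integrable fun x : ℝ => x ^ k * exp (-x ^ β) := by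
  simp_rw [pow_mul_exp_neg_pow_eq_abs_rpow hk hβ]
  exact integrable_abs_rpow_mul_exp_neg_abs_rpow (by positivity)
    (neg_one_lt_zero.trans_le k.cast_nonneg)

theorem integral_pow_mul_exp_neg_pow (hk : Even k) (hβ : Even β) (hβ₀ : 0 < β) :
    ∫ x : ℝ, x ^ k * exp (-x ^ β) = 2 / β * Gamma ((k + 1) / β) := by
  simp_rw [pow_mul_exp_neg_pow_eq_abs_rpow hk hβ]
  exact integral_abs_rpow_mul_exp_neg_abs_rpow (by positivity)
    (neg_one_lt_zero.trans_le k.cast_nonneg)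

end EvenMoments

section LogLikelihood

variable {β : ℕ} {μ σ : ℝ}

theorem genGaussLogLik_eq (hβ : 0 < β) (hσ : σ ≠ 0) (x : ℝ) :
    genGaussLogLik β μ σ x
      = log (β / (2 * Gamma (1 / β))) - log σ - (x - μ) ^ β / σ ^ β := by
  have hΓ : Gamma (1 / β) ≠ 0 := (Gamma_pos_of_pos (by positivity)).ne'
  have hC : (β : ℝ) / (2 * Gamma (1 / β)) ≠ 0 := by positivity
  rw [genGaussLogLik, genGaussPdf, log_mul (by positivity) (exp_ne_zero _), log_exp,
    show (β : ℝ) / (2 * σ * Gamma (1 / β)) = β / (2 * Gamma (1 / β)) / σ by ring,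
    log_div hC hσ]
  ring

theorem hasDerivAt_genGaussLogLik_mu (hβ : 0 < β) (hσ : σ ≠ 0) (x : ℝ) :
    HasDerivAt (fun m => genGaussLogLik β m σ x) (β * (x - μ) ^ (β - 1) / σ ^ β) μ := by
  simp_rw [genGaussLogLik_eq hβ hσ]
  exact ((((hasDerivAt_id μ).const_sub x).pow β).div_const (σ ^ β)).const_sub _ |>.congr_deriv
    (by simp only [id]; ring)

theorem hasDerivAt_genGaussLogLik_sigma (hβ : 0 < β) (hσ : σ ≠ 0) (x : ℝ) :
    HasDerivAt (fun s => genGaussLogLik β μ s x)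
      (-1 / σ + β * (x - μ) ^ β / σ ^ (β + 1)) σ := by
  have hloc : (fun s => genGaussLogLik β μ s x) =ᶠ[nhds σ]
      fun s => log (β / (2 * Gamma (1 / β))) - log s - (x - μ) ^ β / s ^ β := by
    filter_upwards [isOpen_ne.mem_nhds hσ] with s hs using genGaussLogLik_eq hβ hs x
  have hquot :=
    (hasDerivAt_const σ ((x - μ) ^ β)).div (hasDerivAt_pow β σ) (pow_ne_zero β hσ)
  refine HasDerivAt.congr_of_eventuallyEq (HasDerivAt.congr_deriv
    (((hasDerivAt_const σ _).sub (hasDerivAt_log hσ)).sub hquot) ?_) hloc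
  obtain ⟨n, rfl⟩ : ∃ n, β = n + 1 := Nat.exists_eq_succ_of_ne_zero hβ.ne'
  rw [Nat.add_sub_cancel]
  field_simp
  ring

theorem deriv_genGaussLogLik_mu_sq_mul_deriv_sigma_mul_pdf (hβ : 0 < β) (hσ : σ ≠ 0)
    (x : ℝ) :
    (deriv (fun m => genGaussLogLik β m σ x) μ) ^ 2
        * deriv (fun s => genGaussLogLik β μ s x) σ * genGaussPdf β μ σ x
      = β ^ 3 / (2 * Gamma (1 / β) * σ ^ 4) *
        (β * (((x - μ) / σ) ^ (3 * β - 2) * exp (-((x - μ) / σ) ^ β))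
          - ((x - μ) / σ) ^ (2 * β - 2) * exp (-((x - μ) / σ) ^ β)) := by
  have hexp : -((x - μ) / σ) ^ β = -(x - μ) ^ β / σ ^ β := by rw [div_pow, neg_div]
  rw [(hasDerivAt_genGaussLogLik_mu hβ hσ x).deriv,
    (hasDerivAt_genGaussLogLik_sigma hβ hσ x).deriv, genGaussPdf, hexp]
  simp only [div_pow]
  obtain ⟨n, rfl⟩ : ∃ n, β = n + 1 := Nat.exists_eq_succ_of_ne_zero hβ.ne'
  rw [show 3 * (n + 1) - 2 = 2 * n + (n + 1) by omega, show 2 * (n + 1) - 2 = 2 * n by omega,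
    Nat.add_sub_cancel]
  field_simp
  ring

end LogLikelihood

theorem generalized_gaussian_T112
    (β : ℕ) (hβeven : Even β) (hβpos : 0 < β) (μ σ : ℝ) (hσ : 0 < σ) :
    ∫ x : ℝ, (deriv (fun m => genGaussLogLik β m σ x) μ) ^ 2
        * (deriv (fun s => genGaussLogLik β μ s x) σ) * genGaussPdf β μ σ x
      = (1 / σ ^ 3) * ((Real.Gamma ((3 * (β : ℝ) - 1) / (β : ℝ)) * (β : ℝ) ^ 3
          - Real.Gamma ((2 * (β : ℝ) - 1) / (β : ℝ)) * (β : ℝ) ^ 2)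
        / Real.Gamma (1 / (β : ℝ))) := by
  set g : ℝ → ℝ :=
    fun z => β * (z ^ (3 * β - 2) * exp (-z ^ β)) - z ^ (2 * β - 2) * exp (-z ^ β)
  have h3 : Even (3 * β - 2) := (hβeven.mul_left 3).tsub even_two
  have h2 : Even (2 * β - 2) := (even_two_mul β).tsub even_two
  have hg : ∫ z, g z = 2 / β * (β * Gamma ((3 * β - 1) / β) - Gamma ((2 * β - 1) / β)) := by
    rw [integral_sub ((integrable_pow_mul_exp_neg_pow h3 hβeven hβpos).const_mul _)
      (integrable_pow_mul_exp_neg_pow h2 hβeven hβpos), integral_const_mul,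
      integral_pow_mul_exp_neg_pow h3 hβeven hβpos,
      integral_pow_mul_exp_neg_pow h2 hβeven hβpos, Nat.cast_sub (by omega),
      Nat.cast_sub (by omega)]
    push_cast
    ring_nf
  calc _ = ∫ x, β ^ 3 / (2 * Gamma (1 / β) * σ ^ 4) * g ((x - μ) / σ) := by
        congr 1 with x
        exact deriv_genGaussLogLik_mu_sq_mul_deriv_sigma_mul_pdf hβpos hσ.ne' x
    _ = β ^ 3 / (2 * Gamma (1 / β) * σ ^ 4) * σ * ∫ z, g z := by
        rw [integral_const_mul, integral_sub_right_eq_self (fun x => g (x / σ)),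
          Measure.integral_comp_div, abs_of_pos hσ, smul_eq_mul, ← mul_assoc]
    _ = _ := by
        rw [hg]
        field_simp
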